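/- arXiv:2207.00602 — 2 statements merged into one kernel-verified Lean document; each statement's English description precedes it below -/
import Mathlib

section
/- Any weak attractor A : Q → 𝒫(ℕ) of the two-sided birth-death chain RDS has exactly two points on ℙ-almost every fiber, i.e. ℙ({q : #A_q = 2}) = 1; moreover ℙ-a.s. A_q contains exactly one even and exactly one odd natural number. -/
/-!
Off a null set every noise value is `< 1`, so every step of the chain changes parity, and since
steps are `±1` the cocycle is monotone on states of equal parity. The chain is recurrent: above a
level `L` with `2 γ₁ ≤ γ₂ L` it is dominated by a `±1` walk with drift `-1/3` (controlled by
Chebyshev's inequality), and from a state `≤ L` a block of `L` noise values above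
`γ₁ / (γ₁ + γ₂)`, of probability `(1 - γ₁ / (γ₁ + γ₂)) ^ L`, drives it into `{0, 1}`;
independence of disjoint noise blocks makes the probability of avoiding `{0, 1}` decay
geometrically. Hence all states of `[0, M]` eventually coalesce onto the images of `0` and `1`,
which have opposite parities. As `ℙ` is shift invariant, `A_q` has the law of `A_{θⁿ q}`, and for
large `n` invariance puts `A_{θⁿ q} = φⁿ_q(A_q)` inside `φⁿ_q([0, M]) = {φⁿ_q 0, φⁿ_q 1}` while
attraction of `[0, M]` puts both of these points into it.
-/

open MeasureTheory ProbabilityTheory Filter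

/-- The birth-death transition map. -/
noncomputable def bdStep (γ₁ γ₂ : ℝ) (q : ℝ) (x : ℕ) : ℕ :=
  if q < γ₁ / (γ₁ + γ₂ * x) then x + 1 else x - 1

/-- The cocycle of the embedded birth-death chain over the two-sided noise space,
using the coordinates `q₀, …, q_{n−1}`. -/
noncomputable def bdCocycleZ (γ₁ γ₂ : ℝ) (q : ℤ → ℝ) : ℕ → ℕ → ℕ
  | 0, x => x
  | n + 1, x => bdStep γ₁ γ₂ (q (n : ℤ)) (bdCocycleZ γ₁ γ₂ q n x)

/-- The shift `(θq)ₙ = q_{n+1}`. -/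
def shiftZ (q : ℤ → ℝ) : ℤ → ℝ := fun i => q (i + 1)

/-- Distance from a point to a set of naturals. -/
noncomputable def distToSetNat (x : ℕ) (B : Set ℕ) : ℝ :=
  sInf ((fun y : ℕ => |(x : ℝ) - (y : ℝ)|) '' B)

/-- Hausdorff semi-distance on subsets of `ℕ`. -/
noncomputable def hausSemidistNat (B A : Set ℕ) : ℝ :=
  sSup ((fun x => distToSetNat x A) '' B)

namespace BirthDeath

variable {γ₁ γ₂ : ℝ}

@[simp]
lemma bdCocycleZ_zero (q : ℤ → ℝ) (x : ℕ) : bdCocycleZ γ₁ γ₂ q 0 x = x := rfl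

lemma bdCocycleZ_succ (q : ℤ → ℝ) (n x : ℕ) :
    bdCocycleZ γ₁ γ₂ q (n + 1) x = bdStep γ₁ γ₂ (q n) (bdCocycleZ γ₁ γ₂ q n x) := rfl

lemma bdStep_le_succ (r : ℝ) (z : ℕ) : bdStep γ₁ γ₂ r z ≤ z + 1 := by
  unfold bdStep; split <;> omega

lemma sub_one_le_bdStep (r : ℝ) (z : ℕ) : z - 1 ≤ bdStep γ₁ γ₂ r z := by
  unfold bdStep; split <;> omega

/-- At `0` the threshold is `γ₁ / γ₁ = 1`, so a noise value `r < 1` forces a step up. -/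
lemma bdStep_mod_two (hγ₁ : 0 < γ₁) {r : ℝ} (hr : r < 1) (z : ℕ) :
    bdStep γ₁ γ₂ r z % 2 = (z + 1) % 2 := by
  rcases z with _ | z
  · simp [bdStep, div_self hγ₁.ne', hr]
  · unfold bdStep; split <;> omega

lemma bdCocycleZ_le_add (q : ℤ → ℝ) (n x : ℕ) : bdCocycleZ γ₁ γ₂ q n x ≤ x + n := by
  induction n with
  | zero => simp
  | succ n ih =>
    have := bdStep_le_succ (γ₁ := γ₁) (γ₂ := γ₂) (q n) (bdCocycleZ γ₁ γ₂ q n x)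
    rw [bdCocycleZ_succ]; omega

lemma bdCocycleZ_mod_two (hγ₁ : 0 < γ₁) {q : ℤ → ℝ} {n : ℕ} (hq : ∀ i < n, q i < 1)
    (x : ℕ) : bdCocycleZ γ₁ γ₂ q n x % 2 = (x + n) % 2 := by
  induction n with
  | zero => simp
  | succ n ih =>
    rw [bdCocycleZ_succ, bdStep_mod_two hγ₁ (hq n n.lt_succ_self),
      Nat.add_mod, ih fun i hi => hq i (by omega)]
    omega

/-- Two same-parity states are two apart or equal, and a step moves each by one. -/
lemma bdCocycleZ_mono (hγ₁ : 0 < γ₁) {q : ℤ → ℝ} {n : ℕ} (hq : ∀ i < n, q i < 1)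
    {x y : ℕ} (hpar : x % 2 = y % 2) (hxy : x ≤ y) :
    bdCocycleZ γ₁ γ₂ q n x ≤ bdCocycleZ γ₁ γ₂ q n y := by
  induction n with
  | zero => simpa
  | succ n ih =>
    have hq' : ∀ i < n, q i < 1 := fun i hi => hq i (by omega)
    have hle := ih hq'
    have hpx := bdCocycleZ_mod_two (γ₂ := γ₂) hγ₁ hq' x
    have hpy := bdCocycleZ_mod_two (γ₂ := γ₂) hγ₁ hq' y
    have h1 := bdStep_le_succ (γ₁ := γ₁) (γ₂ := γ₂) (q n) (bdCocycleZ γ₁ γ₂ q n x)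
    have h2 := sub_one_le_bdStep (γ₁ := γ₁) (γ₂ := γ₂) (q n) (bdCocycleZ γ₁ γ₂ q n y)
    rw [bdCocycleZ_succ, bdCocycleZ_succ]
    rcases hle.eq_or_lt with heq | hlt
    · rw [heq]
    · omega

lemma bdCocycleZ_eq_of_le {q : ℤ → ℝ} {n m x y : ℕ}
    (h : bdCocycleZ γ₁ γ₂ q n x = bdCocycleZ γ₁ γ₂ q n y) (hnm : n ≤ m) :
    bdCocycleZ γ₁ γ₂ q m x = bdCocycleZ γ₁ γ₂ q m y := by
  induction m, hnm using Nat.le_induction with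
  | base => exact h
  | succ m _ ih => rw [bdCocycleZ_succ, bdCocycleZ_succ, ih]

lemma bdCocycleZ_eq_of_le_one (hγ₁ : 0 < γ₁) {q : ℤ → ℝ} {n : ℕ} (hq : ∀ i < n, q i < 1)
    {x y : ℕ} (hxy : x ≤ y) (hpar : x % 2 = y % 2) (hy : bdCocycleZ γ₁ γ₂ q n y ≤ 1) :
    bdCocycleZ γ₁ γ₂ q n x = bdCocycleZ γ₁ γ₂ q n y := by
  have := bdCocycleZ_mono (γ₂ := γ₂) hγ₁ hq hpar hxy
  have := bdCocycleZ_mod_two (γ₂ := γ₂) hγ₁ hq x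
  have := bdCocycleZ_mod_two (γ₂ := γ₂) hγ₁ hq y
  omega

/-- Above a level `L` with `2 γ₁ ≤ γ₂ L` the up-threshold `γ₁ / (γ₁ + γ₂ z)` is at most `1/3`,
so there the chain moves up only when this walk does. -/
noncomputable def walkIncr (r : ℝ) : ℝ := if r < 1 / 3 then 1 else -1

lemma measurable_walkIncr : Measurable walkIncr :=
  Measurable.ite measurableSet_Iio measurable_const measurable_const

lemma walkIncr_mem_Icc (r : ℝ) : walkIncr r ∈ Set.Icc (-1) 1 := by
  unfold walkIncr; split <;> norm_num

section Drift

variable (hγ₁ : 0 < γ₁) (hγ₂ : 0 < γ₂)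
include hγ₁ hγ₂

lemma bdStep_le_add_walkIncr {L z : ℕ} (hL : 2 * γ₁ ≤ γ₂ * L) (hz : L < z) (r : ℝ) :
    (bdStep γ₁ γ₂ r z : ℝ) ≤ z + walkIncr r := by
  have hLz : (L : ℝ) ≤ z := by exact_mod_cast hz.le
  have hthresh : γ₁ / (γ₁ + γ₂ * z) ≤ 1 / 3 := by
    rw [div_le_iff₀ (by positivity)]; nlinarith
  unfold bdStep walkIncr
  split_ifs with hup hlow
  · push_cast; rfl
  · linarith
  · rw [Nat.cast_pred (by omega)]; linarith
  · rw [Nat.cast_pred (by omega)]; linarith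

lemma bdCocycleZ_le_add_sum_walkIncr {L : ℕ} (hL : 2 * γ₁ ≤ γ₂ * L) (q : ℤ → ℝ) (y a : ℕ) :
    ∀ J : ℕ, (∀ k, a ≤ k → k < a + J → L < bdCocycleZ γ₁ γ₂ q k y) →
      (bdCocycleZ γ₁ γ₂ q (a + J) y : ℝ) ≤
        bdCocycleZ γ₁ γ₂ q a y + ∑ k ∈ Finset.range J, walkIncr (q ↑(a + k))
  | 0, _ => by simp
  | J + 1, hhigh => by
    have ih := bdCocycleZ_le_add_sum_walkIncr hL q y a J
      fun k hak hk => hhigh k hak (by omega)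
    have hstep := bdStep_le_add_walkIncr hγ₁ hγ₂ hL
      (hhigh (a + J) (by omega) (by omega)) (q ↑(a + J))
    rw [← add_assoc, bdCocycleZ_succ, Finset.sum_range_succ]
    linarith

lemma bdStep_eq_sub_one {z : ℕ} (hz : 1 ≤ z) {r : ℝ} (hr : γ₁ / (γ₁ + γ₂) ≤ r) :
    bdStep γ₁ γ₂ r z = z - 1 := by
  have hz' : (1 : ℝ) ≤ z := by exact_mod_cast hz
  have : γ₁ / (γ₁ + γ₂ * z) ≤ γ₁ / (γ₁ + γ₂) :=
    div_le_div_of_nonneg_left hγ₁.le (by positivity) (by nlinarith)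
  simp only [bdStep, if_neg (not_lt.2 (this.trans hr))]

/-- Noise `≥ γ₁ / (γ₁ + γ₂)` moves every positive state down. -/
lemma bdCocycleZ_le_one_of_forall_ge {q : ℤ → ℝ} {m L y : ℕ}
    (hm : bdCocycleZ γ₁ γ₂ q m y ≤ L) (hq : ∀ k < L, γ₁ / (γ₁ + γ₂) ≤ q ↑(m + k)) :
    bdCocycleZ γ₁ γ₂ q (m + L) y ≤ 1 := by
  suffices ∀ j ≤ L, bdCocycleZ γ₁ γ₂ q (m + j) y ≤ max (L - j) 1 by simpa using this L le_rfl
  intro j hj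
  induction j with
  | zero => simpa using le_max_of_le_left hm
  | succ j ih =>
    have ih := ih (by omega)
    rw [← add_assoc, bdCocycleZ_succ]
    rcases Nat.eq_zero_or_pos (bdCocycleZ γ₁ γ₂ q (m + j) y) with h0 | hpos
    · have := bdStep_le_succ (γ₁ := γ₁) (γ₂ := γ₂) (q ↑(m + j)) 0
      rw [h0]; omega
    · rw [bdStep_eq_sub_one hγ₁ hγ₂ hpos (hq j (by omega))]; omega

end Drift

section Measurability

lemma measurable_coord_piFinset {ι : Type*} {X : ι → Type*} [∀ i, MeasurableSpace (X i)]
    {s : Finset ι} {i : ι} (hi : i ∈ s) :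
    Measurable[Filtration.piFinset s] (fun q : (∀ i, X i) => q i) :=
  (measurable_pi_apply (⟨i, hi⟩ : s)).comp (comap_measurable (m := MeasurableSpace.pi) s.restrict)

lemma measure_inter_eq_mul_of_piFinset {ι : Type*} {X : ι → Type*} [∀ i, MeasurableSpace (X i)]
    {P : Measure (∀ i, X i)} (hIndep : iIndepFun (fun i (q : ∀ i, X i) => q i) P)
    {s t : Finset ι} (hst : Disjoint s t) {F G : Set (∀ i, X i)}
    (hF : MeasurableSet[Filtration.piFinset s] F) (hG : MeasurableSet[Filtration.piFinset t] G) :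
    P (F ∩ G) = P F * P G := by
  obtain ⟨F, hF, rfl⟩ := hF
  obtain ⟨G, hG, rfl⟩ := hG
  exact (hIndep.indepFun_finset s t hst measurable_pi_apply).measure_inter_preimage_eq_mul
    F G hF hG

lemma measurable_bdStep : Measurable (fun p : ℝ × ℕ => bdStep γ₁ γ₂ p.1 p.2) :=
  measurable_from_prod_countable_left fun _ => by
    dsimp only [bdStep]
    exact Measurable.ite (measurableSet_lt measurable_id measurable_const) measurable_const
      measurable_const

lemma measurable_bdCocycleZ_piFinset {s : Finset ℤ} {n : ℕ} (hs : ∀ i < n, (i : ℤ) ∈ s)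
    (y : ℕ) : Measurable[Filtration.piFinset s] (fun q => bdCocycleZ γ₁ γ₂ q n y) := by
  induction n with
  | zero => exact measurable_const
  | succ n ih =>
    exact measurable_bdStep.comp ((measurable_coord_piFinset (hs n n.lt_succ_self)).prodMk
      (ih fun i hi => hs i (by omega)))

lemma measurable_bdCocycleZ (n y : ℕ) : Measurable (fun q => bdCocycleZ γ₁ γ₂ q n y) :=
  (measurable_bdCocycleZ_piFinset (s := Finset.Ico 0 n) (by simp) y).mono
    (Filtration.le _ _) le_rfl

end Measurability

section ProductMeasure

lemma shiftZ_iterate_apply (n : ℕ) (q : ℤ → ℝ) (i : ℤ) : shiftZ^[n] q i = q (i + n) := by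
  induction n generalizing q with
  | zero => simp
  | succ n ih => rw [Function.iterate_succ_apply, ih]; simp [shiftZ]; ring_nf

lemma shiftZ_iterate_eq (n : ℕ) :
    shiftZ^[n] = MeasurableEquiv.piCongrLeft (fun _ : ℤ => ℝ) (Equiv.subRight (n : ℤ)) := by
  funext q i
  simp [shiftZ_iterate_apply, MeasurableEquiv.coe_piCongrLeft, Equiv.piCongrLeft_apply]

instance : IsProbabilityMeasure (volume.restrict (Set.Icc (0 : ℝ) 1)) := ⟨by simp⟩

lemma measure_coord_preimage {P : Measure (ℤ → ℝ)}
    (hUnif : ∀ i : ℤ, P.map (fun q => q i) = volume.restrict (Set.Icc (0 : ℝ) 1))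
    (i : ℤ) {E : Set ℝ} (hE : MeasurableSet E) :
    P ((fun q : ℤ → ℝ => q i) ⁻¹' E) = volume (E ∩ Set.Icc 0 1) := by
  rw [← Measure.map_apply (measurable_pi_apply i) hE, hUnif i, Measure.restrict_apply hE]

variable {P : Measure (ℤ → ℝ)}
  (hIndep : iIndepFun (fun (i : ℤ) (q : ℤ → ℝ) => q i) P)
  (hUnif : ∀ i : ℤ, P.map (fun q => q i) = volume.restrict (Set.Icc (0 : ℝ) 1))

include hIndep hUnif in
lemma eq_infinitePi_uniform [IsProbabilityMeasure P] :
    P = Measure.infinitePi fun _ : ℤ => volume.restrict (Set.Icc (0 : ℝ) 1) := by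
  simpa [hUnif, Measure.map_id'] using
    (iIndepFun_iff_map_fun_eq_infinitePi_map measurable_pi_apply).1 hIndep

include hIndep hUnif in
/-- `θⁿ` is a measurable equivalence, so this holds for every set, measurable or not. -/
lemma measure_preimage_shiftZ_iterate [IsProbabilityMeasure P] (n : ℕ) (s : Set (ℤ → ℝ)) :
    P (shiftZ^[n] ⁻¹' s) = P s := by
  rw [eq_infinitePi_uniform hIndep hUnif, shiftZ_iterate_eq, ← MeasurableEquiv.map_apply]
  exact congrArg (· s) (Measure.infinitePi_map_piCongrLeft
    (fun _ : ℤ => volume.restrict (Set.Icc (0 : ℝ) 1)) _)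

include hUnif in
lemma ae_forall_lt_one : ∀ᵐ q ∂P, ∀ i : ℕ, q i < 1 := by
  refine ae_all_iff.2 fun i => ae_iff.2 ?_
  have hsub : Set.Ici (1 : ℝ) ∩ Set.Icc 0 1 ⊆ {1} := fun r hr => le_antisymm hr.2.2 hr.1
  have := measure_coord_preimage hUnif i (measurableSet_Ici (a := (1 : ℝ)))
  simp only [not_lt]
  exact nonpos_iff_eq_zero.1 (this.trans_le (measure_mono hsub) |>.trans_eq Real.volume_singleton)

include hIndep hUnif in
lemma measure_forall_le_coord {c : ℝ} (hc : 0 ≤ c) (m L : ℕ) :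
    P {q | ∀ k < L, c ≤ q ↑(m + k)} = ENNReal.ofReal (1 - c) ^ L := by
  let S := (Finset.range L).map ⟨fun k => ((m + k : ℕ) : ℤ), fun _ _ h => by simpa using h⟩
  have hset : {q : ℤ → ℝ | ∀ k < L, c ≤ q ↑(m + k)} = ⋂ i ∈ S, (fun q => q i) ⁻¹' Set.Ici c := by
    ext q; simp [S]
  have hfactor (i : ℤ) : P ((fun q => q i) ⁻¹' Set.Ici c) = ENNReal.ofReal (1 - c) := by
    have hinter : Set.Ici c ∩ Set.Icc 0 1 = Set.Icc c 1 := by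
      ext r; simp only [Set.mem_inter_iff, Set.mem_Ici, Set.mem_Icc]; grind
    rw [measure_coord_preimage hUnif i measurableSet_Ici, hinter, Real.volume_Icc]
  rw [hset, hIndep.measure_inter_preimage_eq_mul S fun _ _ => measurableSet_Ici]
  simp [hfactor, S]

end ProductMeasure

section WalkTail

variable {P : Measure (ℤ → ℝ)}
  (hIndep : iIndepFun (fun (i : ℤ) (q : ℤ → ℝ) => q i) P)
  (hUnif : ∀ i : ℤ, P.map (fun q => q i) = volume.restrict (Set.Icc (0 : ℝ) 1))

lemma integral_walkIncr : ∫ r, walkIncr r ∂volume.restrict (Set.Icc (0 : ℝ) 1) = -1 / 3 := by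
  have hind : walkIncr = fun r => (Set.Iio (1 / 3 : ℝ)).indicator (fun _ => 2) r - 1 := by
    funext r
    by_cases h : r < 1 / 3
    · rw [walkIncr, if_pos h, Set.indicator_of_mem (show r ∈ Set.Iio (1 / 3) from h)]; norm_num
    · rw [walkIncr, if_neg h, Set.indicator_of_notMem (show r ∉ Set.Iio (1 / 3) from h)]
      norm_num
  have hvol : volume (Set.Iio (1 / 3 : ℝ) ∩ Set.Icc 0 1) = ENNReal.ofReal (1 / 3) := by
    rw [show Set.Iio (1 / 3 : ℝ) ∩ Set.Icc 0 1 = Set.Ico 0 (1 / 3) by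
      ext r; simp only [Set.mem_inter_iff, Set.mem_Iio, Set.mem_Icc, Set.mem_Ico]; grind,
      Real.volume_Ico]
    norm_num
  rw [hind, integral_sub ((integrable_const _).indicator measurableSet_Iio) (integrable_const _),
    integral_indicator_const _ measurableSet_Iio, measureReal_def,
    Measure.restrict_apply measurableSet_Iio, hvol]
  norm_num

include hUnif in
lemma integral_walkIncr_coord (i : ℤ) : ∫ q, walkIncr (q i) ∂P = -1 / 3 := by
  rw [← integral_map (measurable_pi_apply _).aemeasurable
    measurable_walkIncr.aestronglyMeasurable, hUnif, integral_walkIncr]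

lemma memLp_walkIncr_coord [IsFiniteMeasure P] (i : ℤ) :
    MemLp (fun q : ℤ → ℝ => walkIncr (q i)) 2 P :=
  MemLp.of_bound (measurable_walkIncr.comp (measurable_pi_apply _)).aestronglyMeasurable 1
    (ae_of_all _ fun _ => abs_le.2 (walkIncr_mem_Icc _))

include hIndep in
lemma variance_sum_walkIncr_le [IsProbabilityMeasure P] (a J : ℕ) :
    variance (∑ k ∈ Finset.range J, fun q : ℤ → ℝ => walkIncr (q ↑(a + k))) P ≤ J := by
  rw [IndepFun.variance_sum (fun k _ => memLp_walkIncr_coord _) fun k _ l _ hkl =>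
    (hIndep.indepFun (i := ((a + k : ℕ) : ℤ)) (j := ((a + l : ℕ) : ℤ))
      (by simpa using hkl)).comp measurable_walkIncr measurable_walkIncr]
  calc ∑ k ∈ Finset.range J, variance (fun q : ℤ → ℝ => walkIncr (q ↑(a + k))) P
      ≤ ∑ _k ∈ Finset.range J, (1 : ℝ) :=
        Finset.sum_le_sum fun _ _ => (variance_le_sq_of_bounded
          (ae_of_all _ fun _ => walkIncr_mem_Icc _)
          (measurable_walkIncr.comp (measurable_pi_apply _)).aemeasurable).trans_eq (by norm_num)
    _ = J := by simp

include hUnif in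
lemma integral_sum_walkIncr [IsFiniteMeasure P] (a J : ℕ) :
    P[∑ k ∈ Finset.range J, fun q : ℤ → ℝ => walkIncr (q ↑(a + k))] = -(J : ℝ) / 3 := by
  simp only [Finset.sum_apply]
  rw [integral_finsetSum _ fun k _ => (memLp_walkIncr_coord _).integrable one_le_two]
  simp [integral_walkIncr_coord hUnif]
  ring

include hIndep hUnif in
/-- Chebyshev's inequality: the walk has mean `-J/3` and variance at most `J`. -/
lemma measure_neg_le_sum_walkIncr_le [IsProbabilityMeasure P] (a t J : ℕ) (hJ : 0 < J)
    (htJ : 6 * t ≤ J) :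
    P {q | -(t : ℝ) ≤ ∑ k ∈ Finset.range J, walkIncr (q ↑(a + k))} ≤ ENNReal.ofReal (36 / J) := by
  set S := ∑ k ∈ Finset.range J, fun q : ℤ → ℝ => walkIncr (q ↑(a + k))
  have hJpos : (0 : ℝ) < J := by exact_mod_cast hJ
  have hJc : (J : ℝ) / 6 ≤ J / 3 - t := by
    have : (6 * t : ℝ) ≤ J := by exact_mod_cast htJ
    linarith
  have hsub : {q | -(t : ℝ) ≤ ∑ k ∈ Finset.range J, walkIncr (q ↑(a + k))} ⊆
      {q | J / 3 - t ≤ |S q - P[S]|} := by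
    intro q (hq : -(t : ℝ) ≤ _)
    rw [Set.mem_ofPred_eq, integral_sum_walkIncr hUnif]
    simp only [S, Finset.sum_apply]
    exact le_abs.2 (Or.inl (by linarith))
  refine (measure_mono hsub).trans <| (meas_ge_le_variance_div_sq
    (memLp_finsetSum' _ fun k _ => memLp_walkIncr_coord _) (by linarith)).trans
      (ENNReal.ofReal_le_ofReal ?_)
  calc variance S P / (J / 3 - t) ^ 2 ≤ J / (J / 6) ^ 2 :=
        div_le_div₀ hJpos.le (variance_sum_walkIncr_le hIndep a J) (by positivity)
          (pow_le_pow_left₀ (by positivity) hJc 2)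
    _ = 36 / (J : ℝ) := by field_simp; ring

end WalkTail

section Recurrence

def staysAboveOne (γ₁ γ₂ : ℝ) (y n : ℕ) : Set (ℤ → ℝ) :=
  {q | ∀ m ≤ n, 2 ≤ bdCocycleZ γ₁ γ₂ q m y}

def firstLowAfter (γ₁ γ₂ : ℝ) (y L a s : ℕ) : Set (ℤ → ℝ) :=
  {q | bdCocycleZ γ₁ γ₂ q s y ≤ L ∧ ∀ m, a ≤ m → m < s → L < bdCocycleZ γ₁ γ₂ q m y}

lemma pairwiseDisjoint_firstLowAfter (y L a : ℕ) :
    (Set.Ici a).PairwiseDisjoint (firstLowAfter γ₁ γ₂ y L a) := by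
  intro s hs t ht hst
  refine Set.disjoint_left.2 fun q hqs hqt => ?_
  rcases hst.lt_or_gt with h | h
  · exact (hqt.2 s hs h).not_ge hqs.1
  · exact (hqs.2 t ht h).not_ge hqt.1

/-- While the path stays above `L` it lies below the walk, which cannot fall by `y + a`; once it
drops to `≤ L`, a block of `L` high noises would take it into `{0, 1}`. -/
lemma staysAboveOne_subset (hγ₁ : 0 < γ₁) (hγ₂ : 0 < γ₂) {L : ℕ} (hL : 2 * γ₁ ≤ γ₂ * L)
    (y a J : ℕ) :
    staysAboveOne γ₁ γ₂ y (a + J + L) ⊆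
      (staysAboveOne γ₁ γ₂ y a ∩
          {q | -((y + a : ℕ) : ℝ) ≤ ∑ k ∈ Finset.range J, walkIncr (q ↑(a + k))}) ∪
        ⋃ s ∈ Finset.Ico a (a + J), staysAboveOne γ₁ γ₂ y a ∩ firstLowAfter γ₁ γ₂ y L a s ∩
          {q | ∀ k < L, γ₁ / (γ₁ + γ₂) ≤ q ↑(s + k)}ᶜ := by
  classical
  intro q hq
  have hqa : q ∈ staysAboveOne γ₁ γ₂ y a := fun m hm => hq m (by omega)
  by_cases hwalk : -((y + a : ℕ) : ℝ) ≤ ∑ k ∈ Finset.range J, walkIncr (q ↑(a + k))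
  · exact Or.inl ⟨hqa, hwalk⟩
  have hlow : ∃ s, a ≤ s ∧ s < a + J ∧ bdCocycleZ γ₁ γ₂ q s y ≤ L := by
    by_contra! hhigh
    have hdom := bdCocycleZ_le_add_sum_walkIncr hγ₁ hγ₂ hL q y a J hhigh
    have hstart : (bdCocycleZ γ₁ γ₂ q a y : ℝ) ≤ (y + a : ℕ) := by
      exact_mod_cast bdCocycleZ_le_add q a y
    have : (0 : ℝ) ≤ bdCocycleZ γ₁ γ₂ q (a + J) y := Nat.cast_nonneg _
    linarith
  obtain ⟨s₀, has₀, hs₀J, hs₀L⟩ := hlow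
  have hfirst : ∃ s, a ≤ s ∧ bdCocycleZ γ₁ γ₂ q s y ≤ L := ⟨s₀, has₀, hs₀L⟩
  obtain ⟨has, hsL⟩ := Nat.find_spec hfirst
  have hsJ : Nat.find hfirst < a + J := (Nat.find_min' hfirst ⟨has₀, hs₀L⟩).trans_lt hs₀J
  refine Or.inr (Set.mem_biUnion (Finset.mem_coe.2 (Finset.mem_Ico.2 ⟨has, hsJ⟩))
    ⟨⟨hqa, hsL, fun m ham hm => not_le.1 fun h => Nat.find_min hfirst hm ⟨ham, h⟩⟩,
      fun hblock => ?_⟩)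
  have hdown := bdCocycleZ_le_one_of_forall_ge hγ₁ hγ₂ hsL hblock
  have := hq (Nat.find hfirst + L) (by omega)
  omega

lemma measurableSet_staysAboveOne_piFinset {s : Finset ℤ} {n : ℕ} (hs : ∀ i < n, (i : ℤ) ∈ s)
    (y : ℕ) : MeasurableSet[Filtration.piFinset s] (staysAboveOne γ₁ γ₂ y n) := by
  simp only [staysAboveOne, Set.ofPred_forall]
  exact .iInter fun m => .iInter fun hm =>
    measurable_bdCocycleZ_piFinset (fun i hi => hs i (by omega)) y measurableSet_Ici

lemma measurableSet_firstLowAfter_piFinset {s : Finset ℤ} {t : ℕ} (hs : ∀ i < t, (i : ℤ) ∈ s)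
    (y L a : ℕ) : MeasurableSet[Filtration.piFinset s] (firstLowAfter γ₁ γ₂ y L a t) := by
  simp only [firstLowAfter, Set.ofPred_and, Set.ofPred_forall]
  exact (measurable_bdCocycleZ_piFinset hs y measurableSet_Iic).inter <|
    .iInter fun m => .iInter fun _ => .iInter fun hm =>
      measurable_bdCocycleZ_piFinset (fun i hi => hs i (by omega)) y measurableSet_Ioi

lemma measurableSet_forall_le_coord_piFinset {s : Finset ℤ} {c : ℝ} {m L : ℕ}
    (hs : ∀ k < L, ((m + k : ℕ) : ℤ) ∈ s) :
    MeasurableSet[Filtration.piFinset s] {q : ℤ → ℝ | ∀ k < L, c ≤ q ↑(m + k)} := by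
  simp only [Set.ofPred_forall]
  exact .iInter fun k => .iInter fun hk => measurable_coord_piFinset (hs k hk) measurableSet_Ici

lemma measurableSet_le_sum_walkIncr_piFinset {s : Finset ℤ} {a J : ℕ}
    (hs : ∀ k < J, ((a + k : ℕ) : ℤ) ∈ s) (t : ℝ) :
    MeasurableSet[Filtration.piFinset s]
      {q : ℤ → ℝ | t ≤ ∑ k ∈ Finset.range J, walkIncr (q ↑(a + k))} :=
  measurableSet_le measurable_const <| Finset.measurable_sum _ fun k hk =>
    measurable_walkIncr.comp (measurable_coord_piFinset (hs k (Finset.mem_range.1 hk)))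

lemma sum_measure_inter_firstLowAfter_le {P : Measure (ℤ → ℝ)} (y L a J : ℕ) :
    ∑ s ∈ Finset.Ico a (a + J), P (staysAboveOne γ₁ γ₂ y a ∩ firstLowAfter γ₁ γ₂ y L a s) ≤
      P (staysAboveOne γ₁ γ₂ y a) := by
  have hmeas (s : ℕ) : MeasurableSet (staysAboveOne γ₁ γ₂ y a ∩ firstLowAfter γ₁ γ₂ y L a s) :=
    (Filtration.le _ _ _ (measurableSet_staysAboveOne_piFinset (s := Finset.Ico 0 (a : ℤ))
      (fun i hi => by simp; omega) y)).inter
    (Filtration.le _ _ _ (measurableSet_firstLowAfter_piFinset (s := Finset.Ico 0 (s : ℤ))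
      (fun i hi => by simp; omega) y L a))
  rw [← measure_biUnion_finset (((pairwiseDisjoint_firstLowAfter y L a).subset
    fun s hs => (Finset.mem_Ico.1 hs).1).mono fun s => Set.inter_subset_right) fun s _ => hmeas s]
  exact measure_mono (Set.iUnion₂_subset fun s _ => Set.inter_subset_left)

variable {P : Measure (ℤ → ℝ)} [IsProbabilityMeasure P]
  (hIndep : iIndepFun (fun (i : ℤ) (q : ℤ → ℝ) => q i) P)
  (hUnif : ∀ i : ℤ, P.map (fun q => q i) = volume.restrict (Set.Icc (0 : ℝ) 1))
include hIndep hUnif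

lemma measure_staysAboveOne_inter_le_sum_walkIncr (y a J : ℕ) (hJ : 0 < J)
    (hJ6 : 6 * (y + a) ≤ J) :
    P (staysAboveOne γ₁ γ₂ y a ∩
        {q | -((y + a : ℕ) : ℝ) ≤ ∑ k ∈ Finset.range J, walkIncr (q ↑(a + k))}) ≤
      P (staysAboveOne γ₁ γ₂ y a) * ENNReal.ofReal (36 / J) := by
  rw [measure_inter_eq_mul_of_piFinset hIndep
    (Finset.Ico_disjoint_Ico_consecutive (0 : ℤ) a ((a + J : ℕ) : ℤ))
    (measurableSet_staysAboveOne_piFinset (fun i hi => by simp; omega) y)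
    (measurableSet_le_sum_walkIncr_piFinset (fun k hk => by simp; omega) _)]
  gcongr
  exact_mod_cast measure_neg_le_sum_walkIncr_le hIndep hUnif a (y + a) J hJ hJ6

lemma measure_inter_firstLowAfter_inter_compl {c : ℝ} (hc : 0 ≤ c) (hc1 : c ≤ 1)
    {y L a s : ℕ} (has : a ≤ s) :
    P (staysAboveOne γ₁ γ₂ y a ∩ firstLowAfter γ₁ γ₂ y L a s ∩ {q | ∀ k < L, c ≤ q ↑(s + k)}ᶜ) =
      P (staysAboveOne γ₁ γ₂ y a ∩ firstLowAfter γ₁ γ₂ y L a s) *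
        ENNReal.ofReal (1 - (1 - c) ^ L) := by
  have hH : MeasurableSet[Filtration.piFinset (Finset.Ico (s : ℤ) ↑(s + L))]
      {q : ℤ → ℝ | ∀ k < L, c ≤ q ↑(s + k)} :=
    measurableSet_forall_le_coord_piFinset fun k hk => by simp; omega
  rw [measure_inter_eq_mul_of_piFinset hIndep
    (Finset.Ico_disjoint_Ico_consecutive (0 : ℤ) s ((s + L : ℕ) : ℤ))
    ((Filtration.mono _ (Finset.Ico_subset_Ico_right (by omega : (a : ℤ) ≤ s)) _
      (measurableSet_staysAboveOne_piFinset (fun i hi => by simp; omega) y)).inter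
      (measurableSet_firstLowAfter_piFinset (fun i hi => by simp; omega) y L a)) hH.compl,
    prob_compl_eq_one_sub (Filtration.le _ _ _ hH), measure_forall_le_coord hIndep hUnif hc,
    ← ENNReal.ofReal_pow (by linarith), ← ENNReal.ofReal_one,
    ← ENNReal.ofReal_sub _ (by positivity)]

/-- Splitting each piece of `staysAboveOne_subset` into independent past and future events. -/
lemma measure_staysAboveOne_add_le (hγ₁ : 0 < γ₁) (hγ₂ : 0 < γ₂) {L : ℕ}
    (hL : 2 * γ₁ ≤ γ₂ * L) (y a J : ℕ) (hJ : 0 < J) (hJ6 : 6 * (y + a) ≤ J) :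
    P (staysAboveOne γ₁ γ₂ y (a + J + L)) ≤
      ENNReal.ofReal (36 / J + (1 - (1 - γ₁ / (γ₁ + γ₂)) ^ L)) *
        P (staysAboveOne γ₁ γ₂ y a) := by
  set S := staysAboveOne γ₁ γ₂ y a
  have hc1 : γ₁ / (γ₁ + γ₂) ≤ 1 := (div_le_one (by positivity)).2 (by linarith)
  set ρ := (1 - γ₁ / (γ₁ + γ₂)) ^ L
  have hρ : ρ ≤ 1 := pow_le_one₀ (sub_nonneg.2 hc1) (sub_le_self _ (by positivity))
  calc P (staysAboveOne γ₁ γ₂ y (a + J + L))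
      ≤ P (S ∩ {q | -((y + a : ℕ) : ℝ) ≤ ∑ k ∈ Finset.range J, walkIncr (q ↑(a + k))}) +
          ∑ s ∈ Finset.Ico a (a + J), P (S ∩ firstLowAfter γ₁ γ₂ y L a s ∩
            {q | ∀ k < L, γ₁ / (γ₁ + γ₂) ≤ q ↑(s + k)}ᶜ) :=
        (measure_mono (staysAboveOne_subset hγ₁ hγ₂ hL y a J)).trans <|
          (measure_union_le _ _).trans (add_le_add le_rfl (measure_biUnion_finset_le _ _))
    _ ≤ P S * ENNReal.ofReal (36 / J) + (∑ s ∈ Finset.Ico a (a + J),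
          P (S ∩ firstLowAfter γ₁ γ₂ y L a s)) * ENNReal.ofReal (1 - ρ) := by
        rw [Finset.sum_mul]
        gcongr with s hs
        · exact measure_staysAboveOne_inter_le_sum_walkIncr hIndep hUnif y a J hJ hJ6
        · exact (measure_inter_firstLowAfter_inter_compl hIndep hUnif (by positivity) hc1
            (Finset.mem_Ico.1 hs).1).le
    _ ≤ P S * ENNReal.ofReal (36 / J) + P S * ENNReal.ofReal (1 - ρ) := by
        gcongr; exact sum_measure_inter_firstLowAfter_le y L a J
    _ = _ := by
        rw [← mul_add, ← ENNReal.ofReal_add (by positivity) (sub_nonneg.2 hρ), mul_comm]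

theorem ae_exists_bdCocycleZ_le_one (hγ₁ : 0 < γ₁) (hγ₂ : 0 < γ₂) (y : ℕ) :
    ∀ᵐ q ∂P, ∃ n, bdCocycleZ γ₁ γ₂ q n y ≤ 1 := by
  obtain ⟨L, hL⟩ : ∃ L : ℕ, 2 * γ₁ ≤ γ₂ * L := by
    obtain ⟨L, hL⟩ := exists_nat_ge (2 * γ₁ / γ₂)
    exact ⟨L, by rw [div_le_iff₀ hγ₂] at hL; linarith⟩
  set ρ := (1 - γ₁ / (γ₁ + γ₂)) ^ L
  have hρ : 0 < ρ := pow_pos (sub_pos.2 ((div_lt_one (by positivity)).2 (by linarith))) L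
  have hdecay (K : ℕ) : ∃ n, P (staysAboveOne γ₁ γ₂ y n) ≤ ENNReal.ofReal (1 - ρ / 2) ^ K := by
    induction K with
    | zero => exact ⟨0, by simp [prob_le_one]⟩
    | succ K ih =>
      obtain ⟨n, hn⟩ := ih
      set J := 6 * (y + n) + ⌈72 / ρ⌉₊
      have hJρ : 72 / ρ ≤ J := (Nat.le_ceil _).trans (by simp [J]; positivity)
      have hJ : (0 : ℝ) < J := (by positivity : (0 : ℝ) < 72 / ρ).trans_le hJρ
      refine ⟨n + J + L, (measure_staysAboveOne_add_le hIndep hUnif hγ₁ hγ₂ hL y n J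
        (by exact_mod_cast hJ) (by omega)).trans ?_⟩
      rw [pow_succ']
      gcongr
      have : 36 / (J : ℝ) ≤ ρ / 2 := by
        rw [div_le_iff₀ hJ]; rw [div_le_iff₀ hρ] at hJρ; linarith
      linarith
  have hr : ENNReal.ofReal (1 - ρ / 2) < 1 := by
    rw [ENNReal.ofReal_lt_one]; linarith
  rw [ae_iff]
  refine le_antisymm (ge_of_tendsto' (ENNReal.tendsto_pow_atTop_nhds_zero_of_lt_one hr)
    fun K => ?_) bot_le
  obtain ⟨n, hn⟩ := hdecay K
  refine (measure_mono fun q hq m _ => ?_).trans hn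
  simp only [not_exists, not_le, Set.mem_ofPred_eq] at hq
  exact hq m

end Recurrence

lemma tendsto_measure_compl_of_ae_exists {Ω : Type*} [MeasurableSpace Ω] {μ : Measure Ω}
    [IsFiniteMeasure μ] {s : ℕ → Set Ω} (hs : ∀ n, MeasurableSet (s n)) (hmono : Monotone s)
    (h : ∀ᵐ ω ∂μ, ∃ n, ω ∈ s n) : Tendsto (fun n => μ (s n)ᶜ) atTop (nhds 0) := by
  have hlim := tendsto_measure_iInter_atTop (μ := μ) (fun n => (hs n).compl.nullMeasurableSet)
    (fun _ _ hmn => Set.compl_subset_compl.2 (hmono hmn)) ⟨0, measure_ne_top _ _⟩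
  have h0 : μ (⋂ n, (s n)ᶜ) = 0 := by
    rw [← Set.compl_iUnion]
    exact mem_ae_iff.1 (h.mono fun _ hω => Set.mem_iUnion.2 hω)
  rwa [h0] at hlim

section Coalescence

def coalescedBy (γ₁ γ₂ : ℝ) (M n : ℕ) : Set (ℤ → ℝ) :=
  {q | ∀ x ≤ M, bdCocycleZ γ₁ γ₂ q n x = bdCocycleZ γ₁ γ₂ q n (x % 2)}

lemma measurableSet_coalescedBy (M n : ℕ) : MeasurableSet (coalescedBy γ₁ γ₂ M n) := by
  simp only [coalescedBy, Set.ofPred_forall]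
  exact .iInter fun x => .iInter fun _ =>
    measurableSet_eq_fun (measurable_bdCocycleZ n x) (measurable_bdCocycleZ n _)

lemma monotone_coalescedBy (M : ℕ) : Monotone (coalescedBy γ₁ γ₂ M) :=
  fun _ _ hmn _ hq x hx => bdCocycleZ_eq_of_le (hq x hx) hmn

variable {P : Measure (ℤ → ℝ)} [IsProbabilityMeasure P]
  (hIndep : iIndepFun (fun (i : ℤ) (q : ℤ → ℝ) => q i) P)
  (hUnif : ∀ i : ℤ, P.map (fun q => q i) = volume.restrict (Set.Icc (0 : ℝ) 1))
include hIndep hUnif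

/-- By monotonicity on states of equal parity, `x` merges with `x % 2` once it reaches `{0, 1}`. -/
lemma ae_exists_mem_coalescedBy (hγ₁ : 0 < γ₁) (hγ₂ : 0 < γ₂) (M : ℕ) :
    ∀ᵐ q ∂P, ∃ n, q ∈ coalescedBy γ₁ γ₂ M n := by
  filter_upwards [ae_forall_lt_one hUnif,
    ae_all_iff.2 fun y => ae_exists_bdCocycleZ_le_one hIndep hUnif hγ₁ hγ₂ y] with q hq hhit
  choose g hg using hhit
  refine ⟨(Finset.range (M + 1)).sup g, fun x hx => ?_⟩
  refine bdCocycleZ_eq_of_le ?_ (Finset.le_sup (f := g) (Finset.mem_range.2 (by omega : x < M + 1)))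
  exact (bdCocycleZ_eq_of_le_one hγ₁ (fun i _ => hq i) (Nat.mod_le x 2) (Nat.mod_mod x 2)
    (hg x)).symm

lemma tendsto_measure_compl_coalescedBy (hγ₁ : 0 < γ₁) (hγ₂ : 0 < γ₂) (M : ℕ) :
    Tendsto (fun n => P (coalescedBy γ₁ γ₂ M n)ᶜ) atTop (nhds 0) :=
  tendsto_measure_compl_of_ae_exists (measurableSet_coalescedBy M) (monotone_coalescedBy M)
    (ae_exists_mem_coalescedBy hIndep hUnif hγ₁ hγ₂ M)

end Coalescence

lemma one_le_abs_natCast_sub_natCast {x y : ℕ} (h : x ≠ y) : (1 : ℝ) ≤ |(x : ℝ) - y| := by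
  exact_mod_cast Int.one_le_abs (sub_ne_zero.2 (Int.natCast_inj.not.2 h))

lemma distToSetNat_lt_one_iff {x : ℕ} {B : Set ℕ} (hB : B.Nonempty) :
    distToSetNat x B < 1 ↔ x ∈ B := by
  constructor
  · intro h
    obtain ⟨_, ⟨y, hy, rfl⟩, hlt⟩ := exists_lt_of_csInf_lt (hB.image _) h
    by_contra hx
    exact (one_le_abs_natCast_sub_natCast fun hxy => hx (by rwa [hxy])).not_gt hlt
  · intro hx
    have hbdd : BddBelow ((fun y : ℕ => |(x : ℝ) - y|) '' B) :=
      ⟨0, by rintro _ ⟨y, -, rfl⟩; exact abs_nonneg _⟩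
    exact (csInf_le hbdd ⟨x, hx, rfl⟩).trans_lt (by simp)

lemma mem_of_hausSemidistNat_lt_one {A B : Set ℕ} (hB : B.Finite) (hA : A.Nonempty) {x : ℕ}
    (hx : x ∈ B) (h : hausSemidistNat B A < 1) : x ∈ A :=
  (distToSetNat_lt_one_iff hA).1 <|
    (le_csSup (hB.image _).bddAbove (Set.mem_image_of_mem _ hx)).trans_lt h

lemma measurableSet_setOf_subset_Iic {Ω : Type*} [MeasurableSpace Ω] {A : Ω → Set ℕ}
    (hAne : ∀ ω, (A ω).Nonempty) (hAmeas : ∀ x, Measurable fun ω => distToSetNat x (A ω))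
    (M : ℕ) : MeasurableSet {ω | A ω ⊆ Set.Iic M} := by
  have hmem (x : ℕ) : MeasurableSet {ω | x ∈ A ω} := by
    simp_rw [← distToSetNat_lt_one_iff (hAne _)]
    exact measurableSet_lt (hAmeas x) measurable_const
  simp only [Set.subset_def, Set.ofPred_forall]
  exact .iInter fun x => (hmem x).imp (.const _)

lemma tendsto_measure_compl_setOf_subset_Iic {Ω : Type*} [MeasurableSpace Ω] {μ : Measure Ω}
    [IsFiniteMeasure μ] {A : Ω → Set ℕ} (hAne : ∀ ω, (A ω).Nonempty) (hAfin : ∀ ω, (A ω).Finite)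
    (hAmeas : ∀ x, Measurable fun ω => distToSetNat x (A ω)) :
    Tendsto (fun M => μ {ω | A ω ⊆ Set.Iic M}ᶜ) atTop (nhds 0) :=
  tendsto_measure_compl_of_ae_exists (measurableSet_setOf_subset_Iic hAne hAmeas)
    (fun _ _ hMN _ hω => hω.trans (Set.Iic_subset_Iic.2 hMN))
    (ae_of_all _ fun ω => (hAfin ω).bddAbove)

lemma ncard_eq_two_and_existsUnique_even_odd {u v : ℕ} (huv : u % 2 ≠ v % 2) :
    ({u, v} : Set ℕ).ncard = 2 ∧ (∃! a, a ∈ ({u, v} : Set ℕ) ∧ Even a) ∧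
      (∃! a, a ∈ ({u, v} : Set ℕ) ∧ Odd a) := by
  simp only [Set.mem_insert_iff, Set.mem_singleton_iff, Nat.even_iff, Nat.odd_iff]
  refine ⟨Set.ncard_pair fun h => huv (h ▸ rfl), ?_, ?_⟩ <;>
    rcases Nat.mod_two_eq_zero_or_one u with hu | hu
  · exact ⟨u, ⟨Or.inl rfl, hu⟩, fun a ⟨ha, ha2⟩ => by rcases ha with rfl | rfl <;> omega⟩
  · exact ⟨v, ⟨Or.inr rfl, by omega⟩, fun a ⟨ha, ha2⟩ => by rcases ha with rfl | rfl <;> omega⟩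
  · exact ⟨v, ⟨Or.inr rfl, by omega⟩, fun a ⟨ha, ha2⟩ => by rcases ha with rfl | rfl <;> omega⟩
  · exact ⟨u, ⟨Or.inl rfl, hu⟩, fun a ⟨ha, ha2⟩ => by rcases ha with rfl | rfl <;> omega⟩

/-- Once `[0, M]` has coalesced onto the images of `0` and `1`, invariance bounds the new fiber
by these two points and attraction forces both of them into it. -/
lemma eq_pair_of_coalesced {q : ℤ → ℝ} {n M : ℕ} (hM : 1 ≤ M) (hC : q ∈ coalescedBy γ₁ γ₂ M n)
    {A A' : Set ℕ} (hA : A ⊆ Set.Iic M) (hinv : (fun x => bdCocycleZ γ₁ γ₂ q n x) '' A = A')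
    (hA' : A'.Nonempty)
    (hattr : hausSemidistNat ((fun x => bdCocycleZ γ₁ γ₂ q n x) '' Set.Iic M) A' < 1) :
    A' = {bdCocycleZ γ₁ γ₂ q n 0, bdCocycleZ γ₁ γ₂ q n 1} := by
  have himg : (fun x => bdCocycleZ γ₁ γ₂ q n x) '' Set.Iic M =
      {bdCocycleZ γ₁ γ₂ q n 0, bdCocycleZ γ₁ γ₂ q n 1} := by
    refine subset_antisymm ?_ ?_
    · rintro _ ⟨x, hx, rfl⟩
      rcases Nat.mod_two_eq_zero_or_one x with h | h <;> simp [hC x hx, h]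
    · rintro _ (rfl | rfl | rfl)
      exacts [⟨0, Nat.zero_le M, rfl⟩, ⟨1, hM, rfl⟩]
  rw [← himg]
  exact subset_antisymm (hinv ▸ Set.image_mono hA) fun v hv =>
    mem_of_hausSemidistNat_lt_one ((Set.finite_Iic M).image _) hA' hv hattr

lemma ncard_eq_two_and_existsUnique_even_odd_of_coalesced (hγ₁ : 0 < γ₁) {q : ℤ → ℝ}
    (hq : ∀ i : ℕ, q i < 1) {n M : ℕ} (hM : 1 ≤ M) (hC : q ∈ coalescedBy γ₁ γ₂ M n)
    {A A' : Set ℕ} (hA : A ⊆ Set.Iic M) (hinv : (fun x => bdCocycleZ γ₁ γ₂ q n x) '' A = A')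
    (hA' : A'.Nonempty)
    (hattr : hausSemidistNat ((fun x => bdCocycleZ γ₁ γ₂ q n x) '' Set.Iic M) A' < 1) :
    A'.ncard = 2 ∧ (∃! a, a ∈ A' ∧ Even a) ∧ (∃! a, a ∈ A' ∧ Odd a) := by
  rw [eq_pair_of_coalesced hM hC hA hinv hA' hattr]
  refine ncard_eq_two_and_existsUnique_even_odd ?_
  rw [bdCocycleZ_mod_two hγ₁ (fun i _ => hq i), bdCocycleZ_mod_two hγ₁ (fun i _ => hq i)]
  omega

end BirthDeath

open BirthDeath

/-- Any weak attractor of the two-sided birth-death chain RDS (an invariant random set with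
nonempty finite fibers attracting every finite deterministic set in probability) has exactly
two points on almost every fiber; moreover it contains exactly one even and exactly one odd
natural number almost surely. -/
theorem stmt13 (γ₁ γ₂ : ℝ) (hγ₁ : 0 < γ₁) (hγ₂ : 0 < γ₂)
    (P : Measure (ℤ → ℝ)) [IsProbabilityMeasure P]
    (hIndep : iIndepFun (fun (i : ℤ) (q : ℤ → ℝ) => q i) P)
    (hUnif : ∀ i : ℤ, P.map (fun q => q i) = volume.restrict (Set.Icc (0 : ℝ) 1))
    (A : (ℤ → ℝ) → Set ℕ)
    (hAne : ∀ q, (A q).Nonempty) (hAfin : ∀ q, (A q).Finite)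
    (hAmeas : ∀ x : ℕ, Measurable fun q => distToSetNat x (A q))
    (hAinv : ∀ n : ℕ, ∀ᵐ q ∂P, (fun x => bdCocycleZ γ₁ γ₂ q n x) '' A q = A (shiftZ^[n] q))
    (hAattr : ∀ B : Set ℕ, B.Finite → ∀ ε : ℝ, 0 < ε →
      Tendsto (fun n : ℕ =>
          P {q | ε ≤ hausSemidistNat ((fun x => bdCocycleZ γ₁ γ₂ q n x) '' B)
            (A (shiftZ^[n] q))}) atTop (nhds 0)) :
    ∀ᵐ q ∂P, (A q).ncard = 2 ∧
      (∃! a : ℕ, a ∈ A q ∧ Even a) ∧ (∃! a : ℕ, a ∈ A q ∧ Odd a) := by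
  set Good := {q | (A q).ncard = 2 ∧ (∃! a, a ∈ A q ∧ Even a) ∧ (∃! a, a ∈ A q ∧ Odd a)}
  have hbound (M n : ℕ) (hM : 1 ≤ M) : P Goodᶜ ≤ P {q | 1 ≤ hausSemidistNat
      ((fun x => bdCocycleZ γ₁ γ₂ q n x) '' Set.Iic M) (A (shiftZ^[n] q))} +
        P (coalescedBy γ₁ γ₂ M n)ᶜ + P {q | A q ⊆ Set.Iic M}ᶜ := by
    rw [← measure_preimage_shiftZ_iterate hIndep hUnif n]
    refine (measure_mono_ae ?_).trans
      ((measure_union_le _ _).trans (add_le_add (measure_union_le _ _) le_rfl))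
    filter_upwards [ae_forall_lt_one hUnif, hAinv n] with q hq hinv
    intro (hbad : shiftZ^[n] q ∉ Good)
    by_contra hfar
    change q ∉ (_ : Set (ℤ → ℝ)) ∪ _ ∪ _ at hfar
    simp only [Set.mem_union, Set.mem_compl_iff, Set.mem_ofPred_eq, not_or, not_not, not_le] at hfar
    exact hbad (ncard_eq_two_and_existsUnique_even_odd_of_coalesced hγ₁ hq hM hfar.1.2 hfar.2 hinv
      (hAne _) hfar.1.1)
  have hM (M : ℕ) (hM : 1 ≤ M) : P Goodᶜ ≤ P {q | A q ⊆ Set.Iic M}ᶜ := by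
    have hlim := ((hAattr _ (Set.finite_Iic M) 1 one_pos).add
      (tendsto_measure_compl_coalescedBy hIndep hUnif hγ₁ hγ₂ M)).add
        (tendsto_const_nhds (x := P {q | A q ⊆ Set.Iic M}ᶜ))
    rw [zero_add, zero_add] at hlim
    exact ge_of_tendsto' hlim fun n => hbound M n hM
  exact mem_ae_iff.2 (le_antisymm (ge_of_tendsto (tendsto_measure_compl_setOf_subset_Iic hAne
    hAfin hAmeas) (eventually_atTop.2 ⟨1, hM⟩)) bot_le)
end

section
/- Define the sample measures μ_q := (1/2)·δ_{a₀(q)} + (1/2)·δ_{a₁(q)} on ℕ, where a₀, a₁ are the pullback limits of the birth-death chain. Then: (i) the family (μ_q) is invariant, i.e. the pushforward of μ_q under the map x ↦ f(q₀, x) equals μ_{θq} for ℙ-a.e. q; and (ii) the expected measure B ↦ ∫_Q μ_q(B) dℙ(q) equals the unique stationary distribution ρ of the embedded birth-death Markov chain. -/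
open MeasureTheory ProbabilityTheory Filter

/-- The pullback iterate `φ^{2n}_{θ^{−2n}q}(x)`. -/
noncomputable def bdPullback (γ₁ γ₂ : ℝ) (q : ℤ → ℝ) (n : ℕ) (x : ℕ) : ℕ :=
  bdCocycleZ γ₁ γ₂ (fun i => q (i - 2 * (n : ℤ))) (2 * n) x

/-- Transition probabilities of the embedded birth-death chain. -/
noncomputable def bdP (γ₁ γ₂ : ℝ) (x y : ℕ) : ℝ :=
  if y = x + 1 then γ₁ / (γ₁ + γ₂ * x)
  else if y + 1 = x then γ₂ * x / (γ₁ + γ₂ * x)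
  else 0

/-- The sample measures `μ_q = ½δ_{a₀(q)} + ½δ_{a₁(q)}`. -/
noncomputable def sampleMeasure (a₀ a₁ : (ℤ → ℝ) → ℕ) (q : ℤ → ℝ) : Measure ℕ :=
  (1 / 2 : ENNReal) • Measure.dirac (a₀ q) + (1 / 2 : ENNReal) • Measure.dirac (a₁ q)

/-!
The two pullback limits are swapped by one step of the chain: starting the pullback at time
`-2n` from `0`, the first step (a.s.) goes to `1`, so `f(q₀, a₀(q)) = a₁(θq)` and, one step
later, `f(q₀, a₁(q)) = a₀(θq)`. This is (i). For (ii), `a₀, a₁` are a.s. limits of functions of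
the past noise `(qᵢ)_{i<0}`, hence independent of `q₀`; with the shift invariance of `ℙ` this
makes the law of `a₁` equal to the law of `a₀` pushed through one step of the chain, and
vice versa. So the average of the two laws is a stationary distribution, which is unique by
detailed balance.
-/

-- The σ-algebra of the past noise `(qᵢ)_{i < 0}`.
local notation "𝓕₋" => Filtration.piLE (X := fun _ : ℤ => ℝ) (-1)

section Cocycle

variable {γ₁ γ₂ : ℝ}

lemma bdCocycleZ_succ_eq_shift (q : ℤ → ℝ) (n x : ℕ) :
    bdCocycleZ γ₁ γ₂ q (n + 1) x =
      bdCocycleZ γ₁ γ₂ (fun i => q (i + 1)) n (bdStep γ₁ γ₂ (q 0) x) := by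
  induction n with
  | zero => rfl
  | succ n ih =>
    rw [bdCocycleZ, ih, bdCocycleZ]
    push_cast
    rfl

lemma bdStep_zero_of_lt_one (hγ₁ : 0 < γ₁) {r : ℝ} (hr : r < 1) : bdStep γ₁ γ₂ r 0 = 1 := by
  simp [bdStep, div_self hγ₁.ne', hr]

lemma bdStep_bdPullback_zero (hγ₁ : 0 < γ₁) (q : ℤ → ℝ) (n : ℕ) (hq : q (-(2 * n)) < 1) :
    bdStep γ₁ γ₂ (q 0) (bdPullback γ₁ γ₂ q n 0) = bdPullback γ₁ γ₂ (shiftZ q) n 1 := by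
  have h := bdCocycleZ_succ_eq_shift (γ₁ := γ₁) (γ₂ := γ₂) (fun i => q (i - 2 * n)) (2 * n) 0
  simp only [bdCocycleZ, Nat.cast_mul, Nat.cast_ofNat, sub_self, zero_sub] at h
  rw [bdPullback, h, bdStep_zero_of_lt_one hγ₁ hq, bdPullback]
  simp only [shiftZ, sub_add_eq_add_sub]

lemma bdPullback_shiftZ_succ_zero (hγ₁ : 0 < γ₁) (q : ℤ → ℝ) (n : ℕ) (hq : q (-(2 * n + 1)) < 1) :
    bdPullback γ₁ γ₂ (shiftZ q) (n + 1) 0 = bdStep γ₁ γ₂ (q 0) (bdPullback γ₁ γ₂ q n 1) := by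
  have h := bdCocycleZ_succ_eq_shift (γ₁ := γ₁) (γ₂ := γ₂) (fun i => q (i - (2 * n + 1))) (2 * n) 0
  simp only [zero_sub, bdStep_zero_of_lt_one hγ₁ hq] at h
  have hshift :
      (fun i : ℤ => shiftZ q (i - 2 * ((n + 1 : ℕ) : ℤ))) = fun i => q (i - (2 * n + 1)) := by
    funext i; simp only [shiftZ]; push_cast; ring_nf
  rw [bdPullback, hshift, show 2 * (n + 1) = 2 * n + 1 + 1 by ring, bdCocycleZ, h, bdPullback]
  push_cast
  ring_nf

lemma bdStep_eq_of_eventually_bdPullback_zero (hγ₁ : 0 < γ₁) {q : ℤ → ℝ} (hq : ∀ i, q i < 1)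
    {x y : ℕ} (hx : ∀ᶠ n in atTop, bdPullback γ₁ γ₂ q n 0 = x)
    (hy : ∀ᶠ n in atTop, bdPullback γ₁ γ₂ (shiftZ q) n 1 = y) :
    bdStep γ₁ γ₂ (q 0) x = y := by
  obtain ⟨n, hnx, hny⟩ := (hx.and hy).exists
  rw [← hnx, ← hny, bdStep_bdPullback_zero hγ₁ q n (hq _)]

lemma bdStep_eq_of_eventually_bdPullback_one (hγ₁ : 0 < γ₁) {q : ℤ → ℝ} (hq : ∀ i, q i < 1)
    {x y : ℕ} (hx : ∀ᶠ n in atTop, bdPullback γ₁ γ₂ q n 1 = x)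
    (hy : ∀ᶠ n in atTop, bdPullback γ₁ γ₂ (shiftZ q) n 0 = y) :
    bdStep γ₁ γ₂ (q 0) x = y := by
  obtain ⟨n, hnx, hny⟩ := (hx.and ((tendsto_add_atTop_nat 1).eventually hy)).exists
  rw [← hnx, ← hny, bdPullback_shiftZ_succ_zero hγ₁ q n (hq _)]

end Cocycle

section OneStep

open Set

lemma volume_restrict_Icc_Iio {c : ℝ} (hc : c ≤ 1) :
    volume.restrict (Icc (0 : ℝ) 1) (Iio c) = ENNReal.ofReal c := by
  have h : Iio c ∩ Icc 0 1 = Ico 0 c := by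
    ext r; simp only [mem_inter_iff, mem_Iio, mem_Icc, mem_Ico]
    exact ⟨fun h => ⟨h.2.1, h.1⟩, fun h => ⟨h.2, h.1, by linarith [h.2]⟩⟩
  rw [Measure.restrict_apply measurableSet_Iio, h, Real.volume_Ico, sub_zero]

lemma volume_restrict_Icc_Ici {c : ℝ} (hc : 0 ≤ c) :
    volume.restrict (Icc (0 : ℝ) 1) (Ici c) = ENNReal.ofReal (1 - c) := by
  have h : Ici c ∩ Icc 0 1 = Icc c 1 := by
    ext r; simp only [mem_inter_iff, mem_Ici, mem_Icc]
    exact ⟨fun h => ⟨h.1, h.2.2⟩, fun h => ⟨h.1, by linarith [h.1], h.2⟩⟩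
  rw [Measure.restrict_apply measurableSet_Ici, h, Real.volume_Icc]

variable {γ₁ γ₂ : ℝ}

lemma measurable_bdStep_uncurry : Measurable fun p : ℝ × ℕ => bdStep γ₁ γ₂ p.1 p.2 :=
  measurable_from_prod_countable_left fun x =>
    show Measurable fun r : ℝ => if r < γ₁ / (γ₁ + γ₂ * x) then x + 1 else x - 1 from
      Measurable.ite (measurableSet_lt measurable_id measurable_const) measurable_const
        measurable_const

lemma setOf_bdStep_eq (x y : ℕ) :
    {r | bdStep γ₁ γ₂ r x = y} =
      if y = x + 1 then Iio (γ₁ / (γ₁ + γ₂ * x))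
      else if y = x - 1 then Ici (γ₁ / (γ₁ + γ₂ * x)) else ∅ := by
  ext r
  rcases lt_or_ge r (γ₁ / (γ₁ + γ₂ * x)) with hr | hr
  · split_ifs <;> simp [bdStep, hr, hr.not_ge] <;> omega
  · split_ifs <;> simp [bdStep, hr, hr.not_gt] <;> omega

lemma bdP_eq_ite (hγ₁ : 0 < γ₁) (hγ₂ : 0 ≤ γ₂) (x y : ℕ) :
    bdP γ₁ γ₂ x y =
      if y = x + 1 then γ₁ / (γ₁ + γ₂ * x)
      else if y = x - 1 then 1 - γ₁ / (γ₁ + γ₂ * x) else 0 := by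
  have hd : 0 < γ₁ + γ₂ * x := by positivity
  rcases Nat.eq_zero_or_pos x with rfl | hx
  · simp [bdP, hγ₁.ne']
  · unfold bdP
    split_ifs <;> first | omega | rfl | (field_simp; ring)

lemma volume_restrict_Icc_setOf_bdStep_eq (hγ₁ : 0 < γ₁) (hγ₂ : 0 ≤ γ₂) (x y : ℕ) :
    volume.restrict (Icc (0 : ℝ) 1) {r | bdStep γ₁ γ₂ r x = y} =
      ENNReal.ofReal (bdP γ₁ γ₂ x y) := by
  have hd : 0 < γ₁ + γ₂ * x := by positivity
  rw [setOf_bdStep_eq, bdP_eq_ite hγ₁ hγ₂]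
  split_ifs
  · exact volume_restrict_Icc_Iio ((div_le_one hd).2 (by nlinarith [x.cast_nonneg (α := ℝ)]))
  · exact volume_restrict_Icc_Ici (by positivity)
  · simp

end OneStep

section Transition

variable {γ₁ γ₂ : ℝ} {Ω : Type*} [MeasurableSpace Ω] {P : Measure Ω}

theorem map_bdStep_apply_singleton (hγ₁ : 0 < γ₁) (hγ₂ : 0 ≤ γ₂) {a : Ω → ℕ} {ξ : Ω → ℝ}
    (ha : Measurable a) (hξ : Measurable ξ) (hind : IndepFun a ξ P)
    (hξ_law : P.map ξ = volume.restrict (Set.Icc 0 1)) (y : ℕ) :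
    P.map (fun ω => bdStep γ₁ γ₂ (ξ ω) (a ω)) {y} =
      ∑' x, P.map a {x} * ENNReal.ofReal (bdP γ₁ γ₂ x y) := by
  have hS : ∀ x, MeasurableSet {r | bdStep γ₁ γ₂ r x = y} := fun x =>
    measurable_bdStep_uncurry.comp (measurable_id.prodMk measurable_const)
      (measurableSet_singleton y)
  have hfiber : (fun ω => bdStep γ₁ γ₂ (ξ ω) (a ω)) ⁻¹' {y} =
      ⋃ x, a ⁻¹' {x} ∩ ξ ⁻¹' {r | bdStep γ₁ γ₂ r x = y} := by
    ext ω; simp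
  have hmeas : Measurable fun ω => bdStep γ₁ γ₂ (ξ ω) (a ω) :=
    measurable_bdStep_uncurry.comp (hξ.prodMk ha)
  rw [Measure.map_apply hmeas (measurableSet_singleton y),
    hfiber, measure_iUnion (fun x x' hxx' => ((Set.disjoint_singleton.2 hxx').preimage a).mono
      Set.inter_subset_left Set.inter_subset_left)
      fun x => (ha (measurableSet_singleton x)).inter (hξ (hS x))]
  refine tsum_congr fun x => ?_
  rw [hind.measure_inter_preimage_eq_mul _ _ (measurableSet_singleton x) (hS x),
    Measure.map_apply ha (measurableSet_singleton x), ← Measure.map_apply hξ (hS x), hξ_law,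
    volume_restrict_Icc_setOf_bdStep_eq hγ₁ hγ₂]

end Transition

section Noise

variable {P : Measure (ℤ → ℝ)}

lemma measurePreserving_shiftZ {μ : Measure ℝ}
    (hIndep : iIndepFun (fun (i : ℤ) (q : ℤ → ℝ) => q i) P)
    (hlaw : ∀ i, P.map (fun q => q i) = μ) : MeasurePreserving shiftZ P P := by
  have := hIndep.isProbabilityMeasure
  have : IsProbabilityMeasure μ :=
    hlaw 0 ▸ Measure.isProbabilityMeasure_map (measurable_pi_apply 0).aemeasurable
  have hP : P = Measure.infinitePi fun _ : ℤ => μ := by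
    simpa [hlaw] using hIndep.map_fun_eq_infinitePi_map measurable_pi_apply
  have hshift :
      ⇑(MeasurableEquiv.piCongrLeft (fun _ : ℤ => ℝ) (Equiv.subRight (1 : ℤ))) = shiftZ := by
    funext q i
    simp [MeasurableEquiv.coe_piCongrLeft, Equiv.piCongrLeft_apply, shiftZ]
  rw [← hshift, hP]
  exact ⟨MeasurableEquiv.measurable _,
    Measure.infinitePi_map_piCongrLeft (X := fun _ : ℤ => ℝ) (fun _ => μ) (Equiv.subRight 1)⟩

lemma indepFun_eval_zero_of_measurable_past {β : Type*} [MeasurableSpace β]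
    (hIndep : iIndepFun (fun (i : ℤ) (q : ℤ → ℝ) => q i) P) {a : (ℤ → ℝ) → β}
    (ha : Measurable[𝓕₋] a) : IndepFun a (fun q => q 0) P := by
  let m : ℤ → MeasurableSpace (ℤ → ℝ) := fun i => MeasurableSpace.comap (fun q => q i) inferInstance
  have h := indep_biSup_compl (fun i => (measurable_pi_apply i).comap_le)
    ((iIndepFun_iff_iIndep _ _ _).1 hIndep) (Set.Iic (-1))
  have hpast : 𝓕₋ ≤ ⨆ j ∈ Set.Iic (-1), m j := by
    simp only [Filtration.piLE, MeasurableSpace.pi, MeasurableSpace.comap_iSup,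
      MeasurableSpace.comap_comp]
    exact iSup_le fun j => le_iSup₂ (f := fun j (_ : j ∈ Set.Iic (-1)) => m j) j.1 j.2
  rw [IndepFun_iff_Indep]
  exact indep_of_indep_of_le_right (indep_of_indep_of_le_left h (ha.comap_le.trans hpast))
    (le_iSup₂ (f := fun j (_ : j ∈ (Set.Iic (-1))ᶜ) => m j) 0 (by simp))

lemma ae_lt_one (hUnif : ∀ i : ℤ, P.map (fun q => q i) = volume.restrict (Set.Icc (0 : ℝ) 1)) :
    ∀ᵐ q ∂P, ∀ i, q i < 1 := by
  refine ae_all_iff.2 fun i => ?_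
  have h := volume_restrict_Icc_Ici (zero_le_one (α := ℝ))
  rw [sub_self, ENNReal.ofReal_zero, ← hUnif i, Measure.map_apply (measurable_pi_apply i)
    measurableSet_Ici] at h
  simpa [ae_iff, not_lt, Set.preimage] using h

end Noise

section PullbackLimit

variable {γ₁ γ₂ : ℝ}

lemma measurable_bdCocycleZ {m : MeasurableSpace (ℤ → ℝ)} {g : ℤ → ℤ} {n : ℕ}
    (hg : ∀ k : ℕ, k < n → Measurable[m] fun q : ℤ → ℝ => q (g k)) (x : ℕ) :
    Measurable[m] fun q : ℤ → ℝ => bdCocycleZ γ₁ γ₂ (fun i => q (g i)) n x := by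
  induction n with
  | zero => exact measurable_const
  | succ n ih =>
    exact measurable_bdStep_uncurry.comp
      ((hg n n.lt_succ_self).prodMk (ih fun k hk => hg k (hk.trans n.lt_succ_self)))

lemma measurable_piLE_eval {ι : Type*} [Preorder ι] {X : ι → Type*} [∀ i, MeasurableSpace (X i)]
    {i j : ι} (hj : j ≤ i) : Measurable[Filtration.piLE (X := X) i] fun q => q j :=
  (measurable_pi_apply (⟨j, hj⟩ : Set.Iic i)).comp (comap_measurable (Preorder.restrictLe i))

lemma measurable_bdPullback (n x : ℕ) : Measurable[𝓕₋] fun q => bdPullback γ₁ γ₂ q n x :=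
  measurable_bdCocycleZ (fun k hk => measurable_piLE_eval (X := fun _ => ℝ) (by omega)) x

noncomputable def bdPullbackLimit (γ₁ γ₂ : ℝ) (x : ℕ) (q : ℤ → ℝ) : ℕ :=
  limUnder atTop fun n => bdPullback γ₁ γ₂ q n x

lemma measurable_bdPullbackLimit (x : ℕ) : Measurable[𝓕₋] (bdPullbackLimit γ₁ γ₂ x) :=
  (@StronglyMeasurable.limUnder ℕ _ ℕ 𝓕₋ _ _ atTop _ _ _ _
    fun n => (measurable_bdPullback n x).stronglyMeasurable).measurable

lemma bdPullbackLimit_eq {q : ℤ → ℝ} {x y : ℕ} (h : ∀ᶠ n in atTop, bdPullback γ₁ γ₂ q n x = y) :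
    bdPullbackLimit γ₁ γ₂ x q = y :=
  (tendsto_const_nhds.congr' (h.mono fun _ hn => hn.symm)).limUnder_eq

end PullbackLimit

section Stationary

variable {γ₁ γ₂ : ℝ}

lemma bdP_of_ne (x y : ℕ) (h₁ : y ≠ x + 1) (h₂ : y + 1 ≠ x) : bdP γ₁ γ₂ x y = 0 := by
  simp [bdP, h₁, h₂]

lemma bdP_zero_one (hγ₁ : 0 < γ₁) : bdP γ₁ γ₂ 0 1 = 1 := by
  simp [bdP, hγ₁.ne']

lemma bdP_succ_self_pos (hγ₁ : 0 < γ₁) (hγ₂ : 0 < γ₂) (y : ℕ) : 0 < bdP γ₁ γ₂ (y + 1) y := by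
  rw [bdP, if_neg (by omega), if_pos rfl]
  positivity

lemma bdP_succ_add_bdP_succ (hγ₁ : 0 < γ₁) (hγ₂ : 0 < γ₂) (y : ℕ) :
    bdP γ₁ γ₂ (y + 1) (y + 2) + bdP γ₁ γ₂ (y + 1) y = 1 := by
  have hd : 0 < γ₁ + γ₂ * ((y + 1 : ℕ) : ℝ) := by positivity
  rw [bdP, bdP, if_pos rfl, if_neg (by omega), if_pos rfl]
  field_simp

lemma tsum_mul_bdP_zero (f : ℕ → ℝ) : ∑' x, f x * bdP γ₁ γ₂ x 0 = f 1 * bdP γ₁ γ₂ 1 0 :=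
  tsum_eq_single 1 fun x hx => by rw [bdP_of_ne x 0 (by omega) (by omega), mul_zero]

lemma tsum_mul_bdP_succ (f : ℕ → ℝ) (y : ℕ) :
    ∑' x, f x * bdP γ₁ γ₂ x (y + 1) =
      f y * bdP γ₁ γ₂ y (y + 1) + f (y + 2) * bdP γ₁ γ₂ (y + 2) (y + 1) := by
  rw [tsum_eq_sum (s := {y, y + 2}) fun x hx => by
    simp only [Finset.mem_insert, Finset.mem_singleton, not_or] at hx
    rw [bdP_of_ne x _ (by omega) (by omega), mul_zero], Finset.sum_pair (by omega)]

lemma detailed_balance_of_stationary (hγ₁ : 0 < γ₁) (hγ₂ : 0 < γ₂) {f : ℕ → ℝ}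
    (hf : ∀ y, ∑' x, f x * bdP γ₁ γ₂ x y = f y) (y : ℕ) :
    f y * bdP γ₁ γ₂ y (y + 1) = f (y + 1) * bdP γ₁ γ₂ (y + 1) y := by
  induction y with
  | zero => rw [bdP_zero_one hγ₁, mul_one, ← hf 0, tsum_mul_bdP_zero]
  | succ y ih =>
    have h := hf (y + 1)
    rw [tsum_mul_bdP_succ, ih] at h
    linear_combination (f (y + 1)) * bdP_succ_add_bdP_succ hγ₁ hγ₂ y - h

-- Detailed balance gives `g y * ρ 0 = ρ y * g 0`; summing over `y` yields `ρ 0 = g 0`.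
theorem eq_of_bdP_stationary (hγ₁ : 0 < γ₁) (hγ₂ : 0 < γ₂) {g ρ : ℕ → ℝ}
    (hg_sum : ∑' x, g x = 1) (hρ_sum : ∑' x, ρ x = 1)
    (hg : ∀ y, ∑' x, g x * bdP γ₁ γ₂ x y = g y) (hρ : ∀ y, ∑' x, ρ x * bdP γ₁ γ₂ x y = ρ y) :
    g = ρ := by
  have hcross : ∀ y, g y * ρ 0 = ρ y * g 0 := by
    intro y
    induction y with
    | zero => ring
    | succ y ih =>
      refine mul_right_cancel₀ (bdP_succ_self_pos hγ₁ hγ₂ y).ne' ?_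
      linear_combination g 0 * detailed_balance_of_stationary hγ₁ hγ₂ hρ y
        - ρ 0 * detailed_balance_of_stationary hγ₁ hγ₂ hg y + bdP γ₁ γ₂ y (y + 1) * ih
  have h0 : ρ 0 = g 0 := by
    have h : ∑' y, g y * ρ 0 = ∑' y, ρ y * g 0 := tsum_congr hcross
    rwa [tsum_mul_right, tsum_mul_right, hg_sum, hρ_sum, one_mul, one_mul] at h
  have hρ0 : ρ 0 ≠ 0 := by
    intro h
    have hzero : ∀ y, ρ y = 0 := by
      intro y
      induction y with
      | zero => exact h
      | succ y ih =>
        have hdb := detailed_balance_of_stationary hγ₁ hγ₂ hρ y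
        rw [ih, zero_mul] at hdb
        exact (mul_eq_zero.1 hdb.symm).resolve_right (bdP_succ_self_pos hγ₁ hγ₂ y).ne'
    simp [hzero] at hρ_sum
  funext y
  exact mul_right_cancel₀ hρ0 (by rw [hcross y, h0])

end Stationary

section StationaryMeasure

variable {γ₁ γ₂ : ℝ}

lemma bdP_nonneg (hγ₁ : 0 < γ₁) (hγ₂ : 0 ≤ γ₂) (x y : ℕ) : 0 ≤ bdP γ₁ γ₂ x y := by
  unfold bdP
  split_ifs <;> positivity

theorem measure_singleton_eq_ofReal_of_bdP_stationary (hγ₁ : 0 < γ₁) (hγ₂ : 0 < γ₂)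
    {ν : Measure ℕ} [IsProbabilityMeasure ν]
    (hν : ∀ y, ∑' x, ν {x} * ENNReal.ofReal (bdP γ₁ γ₂ x y) = ν {y})
    {ρ : ℕ → ℝ} (hρ_sum : ∑' x, ρ x = 1) (hρ : ∀ y, ∑' x, ρ x * bdP γ₁ γ₂ x y = ρ y) (y : ℕ) :
    ν {y} = ENNReal.ofReal (ρ y) := by
  have hsum : ∑' x, ν {x} = 1 := by
    simpa using Measure.tsum_indicator_apply_singleton ν Set.univ MeasurableSet.univ
  have hg : (fun x => (ν {x}).toReal) = ρ := by
    refine eq_of_bdP_stationary hγ₁ hγ₂ ?_ hρ_sum (fun y => ?_) hρ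
    · rw [← ENNReal.tsum_toReal_eq fun x => measure_ne_top ν _, hsum, ENNReal.toReal_one]
    · rw [← hν y, ENNReal.tsum_toReal_eq fun x => ENNReal.mul_ne_top (measure_ne_top ν _)
        ENNReal.ofReal_ne_top]
      simp only [ENNReal.toReal_mul, ENNReal.toReal_ofReal (bdP_nonneg hγ₁ hγ₂.le _ y)]
  rw [← hg, ENNReal.ofReal_toReal (measure_ne_top ν _)]

lemma tsum_half_add_half_mul {m₀ m₁ : Measure ℕ} {K : ℕ → ℕ → ENNReal}
    (h₀₁ : ∀ y, m₁ {y} = ∑' x, m₀ {x} * K x y) (h₁₀ : ∀ y, m₀ {y} = ∑' x, m₁ {x} * K x y)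
    (y : ℕ) :
    ∑' x, ((1 / 2 : ENNReal) • m₀ + (1 / 2 : ENNReal) • m₁) {x} * K x y =
      ((1 / 2 : ENNReal) • m₀ + (1 / 2 : ENNReal) • m₁) {y} := by
  simp only [Measure.add_apply, Measure.smul_apply, smul_eq_mul, add_mul, mul_assoc]
  rw [ENNReal.tsum_add, ENNReal.tsum_mul_left, ENNReal.tsum_mul_left, ← h₀₁, ← h₁₀, add_comm]

end StationaryMeasure

section PullbackLaws

variable {γ₁ γ₂ : ℝ} {P : Measure (ℤ → ℝ)} {a b : (ℤ → ℝ) → ℕ} {x₀ : ℕ}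

lemma ae_eq_bdPullbackLimit (ha : ∀ᵐ q ∂P, ∀ᶠ n in atTop, bdPullback γ₁ γ₂ q n x₀ = a q) :
    a =ᵐ[P] bdPullbackLimit γ₁ γ₂ x₀ :=
  ha.mono fun _ hq => (bdPullbackLimit_eq hq).symm

lemma aemeasurable_of_ae_eventually_bdPullback
    (ha : ∀ᵐ q ∂P, ∀ᶠ n in atTop, bdPullback γ₁ γ₂ q n x₀ = a q) : AEMeasurable a P :=
  ⟨_, (measurable_bdPullbackLimit x₀).mono (Filtration.le _ _) le_rfl, ae_eq_bdPullbackLimit ha⟩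

theorem ae_bdStep_eq_shiftZ (hγ₁ : 0 < γ₁) (hIndep : iIndepFun (fun (i : ℤ) (q : ℤ → ℝ) => q i) P)
    (hUnif : ∀ i : ℤ, P.map (fun q => q i) = volume.restrict (Set.Icc (0 : ℝ) 1))
    (ha₀ : ∀ᵐ q ∂P, ∀ᶠ n in atTop, bdPullback γ₁ γ₂ q n 0 = a q)
    (ha₁ : ∀ᵐ q ∂P, ∀ᶠ n in atTop, bdPullback γ₁ γ₂ q n 1 = b q) :
    ∀ᵐ q ∂P, bdStep γ₁ γ₂ (q 0) (a q) = b (shiftZ q) ∧ bdStep γ₁ γ₂ (q 0) (b q) = a (shiftZ q) := by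
  have hθ := (measurePreserving_shiftZ hIndep hUnif).quasiMeasurePreserving
  filter_upwards [ae_lt_one hUnif, ha₀, ha₁, hθ.ae ha₀, hθ.ae ha₁] with q hq h₀ h₁ h₀' h₁'
  exact ⟨bdStep_eq_of_eventually_bdPullback_zero hγ₁ hq h₀ h₁',
    bdStep_eq_of_eventually_bdPullback_one hγ₁ hq h₁ h₀'⟩

theorem map_apply_singleton_of_ae_bdStep_eq_shiftZ (hγ₁ : 0 < γ₁) (hγ₂ : 0 ≤ γ₂)
    (hIndep : iIndepFun (fun (i : ℤ) (q : ℤ → ℝ) => q i) P)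
    (hUnif : ∀ i : ℤ, P.map (fun q => q i) = volume.restrict (Set.Icc (0 : ℝ) 1))
    (ha : ∀ᵐ q ∂P, ∀ᶠ n in atTop, bdPullback γ₁ γ₂ q n x₀ = a q) (hb : AEMeasurable b P)
    (hab : ∀ᵐ q ∂P, bdStep γ₁ γ₂ (q 0) (a q) = b (shiftZ q)) (y : ℕ) :
    P.map b {y} = ∑' x, P.map a {x} * ENNReal.ofReal (bdP γ₁ γ₂ x y) := by
  have hθ := measurePreserving_shiftZ hIndep hUnif
  have hlim := measurable_bdPullbackLimit (γ₁ := γ₁) (γ₂ := γ₂) x₀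
  have hb_shift : P.map b = P.map fun q => bdStep γ₁ γ₂ (q 0) (bdPullbackLimit γ₁ γ₂ x₀ q) :=
    calc P.map b = (P.map shiftZ).map b := by rw [hθ.map_eq]
      _ = P.map (b ∘ shiftZ) :=
        AEMeasurable.map_map_of_aemeasurable (by rwa [hθ.map_eq]) hθ.measurable.aemeasurable
      _ = _ := Measure.map_congr <| by
        filter_upwards [hab, ae_eq_bdPullbackLimit ha] with q h₁ h₂
        simp [← h₁, h₂]
  rw [hb_shift, Measure.map_congr (ae_eq_bdPullbackLimit ha)]
  exact map_bdStep_apply_singleton hγ₁ hγ₂ (hlim.mono (Filtration.le _ _) le_rfl)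
    (measurable_pi_apply 0) (indepFun_eval_zero_of_measurable_past hIndep hlim) (hUnif 0) y

end PullbackLaws

section SampleMeasure

lemma lintegral_dirac_apply {Ω α : Type*} [MeasurableSpace Ω] [MeasurableSpace α] {P : Measure Ω}
    {a : Ω → α} (ha : AEMeasurable a P) {B : Set α} (hB : MeasurableSet B) :
    ∫⁻ ω, Measure.dirac (a ω) B ∂P = P.map a B := by
  simp_rw [Measure.dirac_apply' _ hB]
  rw [← lintegral_map' ((measurable_one.indicator hB).aemeasurable) ha, lintegral_indicator_one hB]

lemma map_sampleMeasure (a₀ a₁ : (ℤ → ℝ) → ℕ) (q : ℤ → ℝ) (g : ℕ → ℕ) :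
    (sampleMeasure a₀ a₁ q).map g =
      (1 / 2 : ENNReal) • Measure.dirac (g (a₀ q)) +
        (1 / 2 : ENNReal) • Measure.dirac (g (a₁ q)) := by
  have hg : Measurable g := measurable_from_top
  rw [sampleMeasure, Measure.map_add _ _ hg, Measure.map_smul, Measure.map_smul,
    Measure.map_dirac' hg, Measure.map_dirac' hg]

lemma lintegral_sampleMeasure_apply {P : Measure (ℤ → ℝ)} {a₀ a₁ : (ℤ → ℝ) → ℕ}
    (ha₀ : AEMeasurable a₀ P) (ha₁ : AEMeasurable a₁ P) (B : Set ℕ) :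
    ∫⁻ q, sampleMeasure a₀ a₁ q B ∂P =
      ((1 / 2 : ENNReal) • P.map a₀ + (1 / 2 : ENNReal) • P.map a₁) B := by
  have hdirac : Measurable fun x : ℕ => Measure.dirac x B := measurable_from_top
  have h₀ : AEMeasurable (fun q => Measure.dirac (a₀ q) B) P := hdirac.comp_aemeasurable ha₀
  simp only [sampleMeasure, Measure.add_apply, Measure.smul_apply, smul_eq_mul]
  rw [lintegral_add_left' (h₀.const_mul _),
    lintegral_const_mul' _ _ (by simp), lintegral_const_mul' _ _ (by simp),
    lintegral_dirac_apply ha₀ MeasurableSet.of_discrete,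
    lintegral_dirac_apply ha₁ MeasurableSet.of_discrete]

end SampleMeasure

theorem stmt17_general (γ₁ γ₂ : ℝ) (hγ₁ : 0 < γ₁) (hγ₂ : 0 < γ₂)
    (P : Measure (ℤ → ℝ)) [IsProbabilityMeasure P]
    (hIndep : iIndepFun (fun (i : ℤ) (q : ℤ → ℝ) => q i) P)
    (hUnif : ∀ i : ℤ, P.map (fun q => q i) = volume.restrict (Set.Icc (0 : ℝ) 1))
    (a₀ a₁ : (ℤ → ℝ) → ℕ)
    (ha₀ : ∀ᵐ q ∂P, ∀ᶠ n in atTop, bdPullback γ₁ γ₂ q n 0 = a₀ q)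
    (ha₁ : ∀ᵐ q ∂P, ∀ᶠ n in atTop, bdPullback γ₁ γ₂ q n 1 = a₁ q)
    (ρ : ℕ → ℝ) (hρsum : ∑' x, ρ x = 1)
    (hρstat : ∀ y : ℕ, ∑' x : ℕ, ρ x * bdP γ₁ γ₂ x y = ρ y) :
    -- (i) invariance of the family of sample measures
    (∀ᵐ q ∂P, Measure.map (fun x => bdStep γ₁ γ₂ (q (0 : ℤ)) x)
        (sampleMeasure a₀ a₁ q) = sampleMeasure a₀ a₁ (shiftZ q)) ∧
    -- (ii) the expected measure is the stationary distribution ρ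
    (∀ B : Set ℕ, ∫⁻ q, sampleMeasure a₀ a₁ q B ∂P = ∑' y : B, ENNReal.ofReal (ρ y)) := by
  have hrel := ae_bdStep_eq_shiftZ hγ₁ hIndep hUnif ha₀ ha₁
  refine ⟨?_, fun B => ?_⟩
  · filter_upwards [hrel] with q ⟨h₀, h₁⟩
    rw [map_sampleMeasure, h₀, h₁, sampleMeasure, add_comm]
  have hm₀ := aemeasurable_of_ae_eventually_bdPullback ha₀
  have hm₁ := aemeasurable_of_ae_eventually_bdPullback ha₁
  set ν : Measure ℕ := (1 / 2 : ENNReal) • P.map a₀ + (1 / 2 : ENNReal) • P.map a₁ with hν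
  have : IsProbabilityMeasure ν := ⟨by
    simp [ν, Measure.map_apply_of_aemeasurable hm₀ MeasurableSet.univ,
      Measure.map_apply_of_aemeasurable hm₁ MeasurableSet.univ, ENNReal.inv_two_add_inv_two]⟩
  have hν_stat := tsum_half_add_half_mul
    (map_apply_singleton_of_ae_bdStep_eq_shiftZ hγ₁ hγ₂.le hIndep hUnif ha₀ hm₁
      (hrel.mono fun _ h => h.1))
    (map_apply_singleton_of_ae_bdStep_eq_shiftZ hγ₁ hγ₂.le hIndep hUnif ha₁ hm₀
      (hrel.mono fun _ h => h.2))
  have hνρ : ∀ y, ν {y} = ENNReal.ofReal (ρ y) :=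
    measure_singleton_eq_ofReal_of_bdP_stationary hγ₁ hγ₂ hν_stat hρsum hρstat
  rw [lintegral_sampleMeasure_apply hm₀ hm₁, ← hν,
    ← Measure.tsum_indicator_apply_singleton ν B MeasurableSet.of_discrete,
    tsum_subtype B fun y => ENNReal.ofReal (ρ y)]
  simp only [hνρ]

/-- The sample measures `μ_q = ½δ_{a₀(q)} + ½δ_{a₁(q)}` supported on the attractor of the
birth-death chain satisfy: (i) invariance, i.e. the pushforward of `μ_q` under
`x ↦ f(q₀,x)` equals `μ_{θq}` for a.e. `q`; and (ii) the expected measure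
`B ↦ ∫ μ_q(B) dℙ(q)` equals the unique stationary distribution `ρ` of the embedded
birth-death Markov chain. -/
theorem stmt17 (γ₁ γ₂ : ℝ) (hγ₁ : 0 < γ₁) (hγ₂ : 0 < γ₂)
    (P : Measure (ℤ → ℝ)) [IsProbabilityMeasure P]
    (hIndep : iIndepFun (fun (i : ℤ) (q : ℤ → ℝ) => q i) P)
    (hUnif : ∀ i : ℤ, P.map (fun q => q i) = volume.restrict (Set.Icc (0 : ℝ) 1))
    (a₀ a₁ : (ℤ → ℝ) → ℕ)
    (ha₀ : ∀ᵐ q ∂P, ∀ᶠ n in atTop, bdPullback γ₁ γ₂ q n 0 = a₀ q)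
    (ha₁ : ∀ᵐ q ∂P, ∀ᶠ n in atTop, bdPullback γ₁ γ₂ q n 1 = a₁ q)
    (ρ : ℕ → ℝ) (hρ01 : ∀ x, 0 ≤ ρ x ∧ ρ x ≤ 1) (hρsum : ∑' x, ρ x = 1)
    (hρstat : ∀ y : ℕ, ∑' x : ℕ, ρ x * bdP γ₁ γ₂ x y = ρ y) :
    -- (i) invariance of the family of sample measures
    (∀ᵐ q ∂P, Measure.map (fun x => bdStep γ₁ γ₂ (q (0 : ℤ)) x)
        (sampleMeasure a₀ a₁ q) = sampleMeasure a₀ a₁ (shiftZ q)) ∧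
    -- (ii) the expected measure is the stationary distribution ρ
    (∀ B : Set ℕ, ∫⁻ q, sampleMeasure a₀ a₁ q B ∂P = ∑' y : B, ENNReal.ofReal (ρ y)) :=
  stmt17_general γ₁ γ₂ hγ₁ hγ₂ P hIndep hUnif a₀ a₁ ha₀ ha₁ ρ hρsum hρstat
end
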